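/- Progress: If a closed term a has type A in fragment θ (i.e. · ⊢^θ a : A), then either a is a value or there exists a' such that a steps to a' (a ⇝ a'). -/

import Mathlib

/-- Consistency classifiers: the logical (L) and programmatic (P) fragments. -/
inductive Frag : Type
  | L | P
deriving DecidableEq, Repr

/-- Types, with de Bruijn type variables for recursive types. -/
inductive Ty : Type
  | unit : Ty
  | arrow : Ty → Frag → Ty → Ty       -- A →^θ B
  | sum : Ty → Ty → Ty                -- A + B
  | at_ : Ty → Frag → Ty              -- A @ θ
  | tvar : ℕ → Ty                     -- α
  | mu : Ty → Ty                      -- μα. A  (binds one type variable)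
deriving DecidableEq, Repr

namespace Ty

def size : Ty → ℕ
  | unit => 1
  | arrow A _ B => A.size + B.size + 1
  | sum A B => A.size + B.size + 1
  | at_ A _ => A.size + 1
  | tvar _ => 1
  | mu A => A.size + 1

def rename (ρ : ℕ → ℕ) : Ty → Ty
  | unit => unit
  | arrow A θ B => arrow (A.rename ρ) θ (B.rename ρ)
  | sum A B => sum (A.rename ρ) (B.rename ρ)
  | at_ A θ => at_ (A.rename ρ) θ
  | tvar n => tvar (ρ n)
  | mu A => mu (A.rename (fun n => match n with | 0 => 0 | n+1 => ρ n + 1))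

def subst (σ : ℕ → Ty) : Ty → Ty
  | unit => unit
  | arrow A θ B => arrow (A.subst σ) θ (B.subst σ)
  | sum A B => sum (A.subst σ) (B.subst σ)
  | at_ A θ => at_ (A.subst σ) θ
  | tvar n => σ n
  | mu A => mu (A.subst (fun n => match n with | 0 => tvar 0 | n+1 => (σ n).rename Nat.succ))

end Ty

/-- [B/α]A : substitute B for the outermost type variable of A. -/
def tsubst0 (B A : Ty) : Ty := A.subst (fun n => match n with | 0 => B | n+1 => .tvar n)

/-- Terms, with de Bruijn term variables.  `lam` binds one variable (x);
    `rec` binds two: index 0 is x, index 1 is f.  `unbox` and the branches of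
    `case` bind one variable. -/
inductive Tm : Type
  | var : ℕ → Tm
  | lam : Tm → Tm                     -- λx. a
  | recc : Tm → Tm                     -- rec f x. a
  | app : Tm → Tm → Tm
  | box : Tm → Tm
  | unbox : Tm → Tm → Tm              -- unbox x = a in b
  | unit : Tm
  | inl : Tm → Tm
  | inr : Tm → Tm
  | case : Tm → Tm → Tm → Tm          -- case a of {inl x ⇒ b1 ; inr x ⇒ b2}
  | roll : Tm → Tm
  | unroll : Tm → Tm
deriving DecidableEq, Repr

namespace Tm

def liftR (ρ : ℕ → ℕ) : ℕ → ℕ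
  | 0 => 0
  | n+1 => ρ n + 1

def rename (ρ : ℕ → ℕ) : Tm → Tm
  | var n => var (ρ n)
  | lam a => lam (a.rename (liftR ρ))
  | recc a => recc (a.rename (liftR (liftR ρ)))
  | app a b => app (a.rename ρ) (b.rename ρ)
  | box a => box (a.rename ρ)
  | unbox a b => unbox (a.rename ρ) (b.rename (liftR ρ))
  | unit => unit
  | inl a => inl (a.rename ρ)
  | inr a => inr (a.rename ρ)
  | case a b c => case (a.rename ρ) (b.rename (liftR ρ)) (c.rename (liftR ρ))
  | roll a => roll (a.rename ρ)
  | unroll a => unroll (a.rename ρ)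

def liftS (σ : ℕ → Tm) : ℕ → Tm
  | 0 => var 0
  | n+1 => (σ n).rename Nat.succ

def subst (σ : ℕ → Tm) : Tm → Tm
  | var n => σ n
  | lam a => lam (a.subst (liftS σ))
  | recc a => recc (a.subst (liftS (liftS σ)))
  | app a b => app (a.subst σ) (b.subst σ)
  | box a => box (a.subst σ)
  | unbox a b => unbox (a.subst σ) (b.subst (liftS σ))
  | unit => unit
  | inl a => inl (a.subst σ)
  | inr a => inr (a.subst σ)
  | case a b c => case (a.subst σ) (b.subst (liftS σ)) (c.subst (liftS σ))
  | roll a => roll (a.subst σ)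
  | unroll a => unroll (a.subst σ)

end Tm

/-- [v/x]a : substitute v for the outermost term variable of a. -/
def subst1 (a v : Tm) : Tm := a.subst (fun n => match n with | 0 => v | n+1 => .var n)

/-- [v/x][w/f]a : substitute v for index 0 (x) and w for index 1 (f) in a. -/
def subst2 (a v w : Tm) : Tm :=
  a.subst (fun n => match n with | 0 => v | 1 => w | n+2 => .var n)

/-- Values. -/
inductive IsValue : Tm → Prop
  | var (n : ℕ) : IsValue (.var n)
  | unit : IsValue .unit
  | inl {v} : IsValue v → IsValue (.inl v)
  | inr {v} : IsValue v → IsValue (.inr v)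
  | lam (a : Tm) : IsValue (.lam a)
  | recc (a : Tm) : IsValue (.recc a)
  | box {v} : IsValue v → IsValue (.box v)
  | roll {v} : IsValue v → IsValue (.roll v)

/-- First-order types. -/
inductive FO : Ty → Prop
  | unit : FO .unit
  | sum {A B} : FO A → FO B → FO (.sum A B)
  | at_ (A : Ty) (θ : Frag) : FO (.at_ A θ)

/-- Typing contexts: each variable is tagged with a fragment. -/
abbrev Ctx := List (Frag × Ty)

/-- The typing judgement Γ ⊢^θ a : A. -/
inductive Typing : Ctx → Frag → Tm → Ty → Prop
  | tvar {Γ θ A n} : Γ[n]? = some (θ, A) → Typing Γ θ (.var n) A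
  | tlam {Γ θ' A B a} :
      Typing ((θ', A) :: Γ) .L a B →
      Typing Γ .L (.lam a) (.arrow A θ' B)
  | trec {Γ θ' A B a} :
      Typing ((θ', A) :: (.P, .arrow A θ' B) :: Γ) .P a B →
      Typing Γ .P (.recc a) (.arrow A θ' B)
  | tboxP {Γ θ a A} :
      Typing Γ θ a A → Typing Γ .P (.box a) (.at_ A θ)
  | tboxL {Γ θ a A} :
      Typing Γ .L a A → Typing Γ .L (.box a) (.at_ A θ)
  | tboxLV {Γ v A} :
      IsValue v → Typing Γ .P v A → Typing Γ .L (.box v) (.at_ A .P)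
  | tunbox {Γ θ θ' a b A B} :
      Typing Γ θ a (.at_ A θ') →
      Typing ((θ', A) :: Γ) θ b B →
      Typing Γ θ (.unbox a b) B
  | tapp {Γ θ θ' a b A B} :
      Typing Γ θ a (.arrow A θ' B) →
      Typing Γ θ (.box b) (.at_ A θ') →
      Typing Γ θ (.app a b) B
  | tunit {Γ θ} : Typing Γ θ .unit .unit
  | tsub {Γ a A} : Typing Γ .L a A → Typing Γ .P a A
  | tfoval {Γ v A} :
      IsValue v → FO A → Typing Γ .P v A → Typing Γ .L v A
  | tinl {Γ θ a A B} : Typing Γ θ a A → Typing Γ θ (.inl a) (.sum A B)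
  | tinr {Γ θ a A B} : Typing Γ θ a B → Typing Γ θ (.inr a) (.sum A B)
  | tcase {Γ θ θ' a b1 b2 A B C} :
      Typing Γ θ (.box a) (.at_ (.sum A B) θ') →
      Typing ((θ', A) :: Γ) θ b1 C →
      Typing ((θ', B) :: Γ) θ b2 C →
      Typing Γ θ (.case a b1 b2) C
  | troll {Γ a A} :
      Typing Γ .P a (tsubst0 (.mu A) A) →
      Typing Γ .P (.roll a) (.mu A)
  | tunroll {Γ a A} :
      Typing Γ .P a (.mu A) →
      Typing Γ .P (.unroll a) (tsubst0 (.mu A) A)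

/-- Call-by-value small-step reduction a ⇝ b. -/
inductive Step : Tm → Tm → Prop
  | beta {a v} : IsValue v → Step (.app (.lam a) v) (subst1 a v)
  | betaRec {a v} : IsValue v → Step (.app (.recc a) v) (subst2 a v (.recc a))
  | unbox {v b} : IsValue v → Step (.unbox (.box v) b) (subst1 b v)
  | caseL {v b1 b2} : IsValue v → Step (.case (.inl v) b1 b2) (subst1 b1 v)
  | caseR {v b1 b2} : IsValue v → Step (.case (.inr v) b1 b2) (subst1 b2 v)
  | unroll {v} : IsValue v → Step (.unroll (.roll v)) v
  | app1 {a a' b} : Step a a' → Step (.app a b) (.app a' b)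
  | app2 {v b b'} : IsValue v → Step b b' → Step (.app v b) (.app v b')
  | inl {a a'} : Step a a' → Step (.inl a) (.inl a')
  | inr {a a'} : Step a a' → Step (.inr a) (.inr a')
  | caseCtx {a a' b1 b2} : Step a a' → Step (.case a b1 b2) (.case a' b1 b2)
  | box {a a'} : Step a a' → Step (.box a) (.box a')
  | unbox1 {a a' b} : Step a a' → Step (.unbox a b) (.unbox a' b)
  | roll {a a'} : Step a a' → Step (.roll a) (.roll a')
  | unrollCtx {a a'} : Step a a' → Step (.unroll a) (.unroll a')

/-- Indexed multi-step reduction a ⇝^n b. -/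
inductive StepN : ℕ → Tm → Tm → Prop
  | refl (a : Tm) : StepN 0 a a
  | step {n a b c} : Step a b → StepN n b c → StepN (n+1) a c

/-- Multi-step reduction a ⇝* b. -/
inductive StepStar : Tm → Tm → Prop
  | refl (a : Tm) : StepStar a a
  | step {a b c} : Step a b → StepStar b c → StepStar a c

/-- The step-indexed value interpretation V[[A]]^θ_k.
    (The computational interpretation C[[·]] is inlined in the function-type
    and recursive-type cases; see `Cint` below.) -/
def Vint (k : ℕ) (θ : Frag) (A : Ty) : Set Tm :=
  match A, θ with
  | .unit, _ => {Tm.unit}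
  | .sum A B, θ =>
      {t | (∃ v, t = Tm.inl v ∧ v ∈ Vint k θ A) ∨ (∃ v, t = Tm.inr v ∧ v ∈ Vint k θ B)}
  | .at_ A θ', _ => {t | ∃ v, t = Tm.box v ∧ v ∈ Vint k θ' A}
  | .arrow A θ' B, .L =>
      {t | ∃ a, t = Tm.lam a ∧ Typing [] .L (Tm.lam a) (.arrow A θ' B) ∧
        ∀ j, j ≤ k → ∀ v, v ∈ Vint j θ' A →
          Typing [] .L (subst1 a v) B ∧
          ∃ w, StepStar (subst1 a v) w ∧ IsValue w ∧ w ∈ Vint j .L B}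
  | .arrow A θ' B, .P =>
      {t | ∃ a, t = Tm.recc a ∧ Typing [] .P (Tm.recc a) (.arrow A θ' B) ∧
        ∀ j, j < k → ∀ v, v ∈ Vint j θ' A →
          Typing [] .P (subst2 a v (Tm.recc a)) B ∧
          ∀ i, i ≤ j → ∀ w, StepN i (subst2 a v (Tm.recc a)) w → IsValue w →
            w ∈ Vint (j - i) .P B}
  | .mu _, .L => ∅
  | .mu A, .P =>
      {t | ∃ v, t = Tm.roll v ∧ Typing [] .P (Tm.roll v) (.mu A) ∧
        ∀ j, j < k → v ∈ Vint j .P (tsubst0 (.mu A) A)}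
  | .tvar _, _ => ∅
termination_by (k, A.size)
decreasing_by
  all_goals simp only [Prod.lex_def, Ty.size, true_and, eq_self_iff_true]
  all_goals omega

/-- The step-indexed computational interpretation C[[A]]^θ_k. -/
def Cint (k : ℕ) (θ : Frag) (A : Ty) : Set Tm :=
  match θ with
  | .P => {a | Typing [] .P a A ∧
      ∀ j, j ≤ k → ∀ v, StepN j a v → IsValue v → v ∈ Vint (k - j) .P A}
  | .L => {a | Typing [] .L a A ∧
      ∃ v, StepStar a v ∧ IsValue v ∧ v ∈ Vint k .L A}

/-!
Induction on the typing derivation. An introduction form is a value or steps under its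
evaluation context. For an elimination form the eliminated subterm either steps, and then
so does the whole term by the congruence rule, or it is a value, and then a canonical-forms
lemma gives it the shape (`lam`/`recc`, `box`, `inl`/`inr`, `roll`) that the matching
reduction rule needs. Closedness is what excludes variables, which are values of every type.
-/

def ValueOrSteps (a : Tm) : Prop := IsValue a ∨ ∃ a', Step a a'

namespace ValueOrSteps

variable {a : Tm}

theorem box (h : ValueOrSteps a) : ValueOrSteps (.box a) :=
  Or.imp .box (fun ⟨_, hs⟩ => ⟨_, .box hs⟩) h

theorem inl (h : ValueOrSteps a) : ValueOrSteps (.inl a) :=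
  Or.imp .inl (fun ⟨_, hs⟩ => ⟨_, .inl hs⟩) h

theorem inr (h : ValueOrSteps a) : ValueOrSteps (.inr a) :=
  Or.imp .inr (fun ⟨_, hs⟩ => ⟨_, .inr hs⟩) h

theorem roll (h : ValueOrSteps a) : ValueOrSteps (.roll a) :=
  Or.imp .roll (fun ⟨_, hs⟩ => ⟨_, .roll hs⟩) h

theorem of_box (h : ValueOrSteps (.box a)) : ValueOrSteps a := by
  rcases h with hv | ⟨_, hs⟩
  · cases hv with | box hv => exact Or.inl hv
  · cases hs with | box hs => exact Or.inr ⟨_, hs⟩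

end ValueOrSteps

section CanonicalForms

variable {θ : Frag} {v : Tm}

theorem IsValue.eq_lam_or_eq_recc_of_typing {A B : Ty} {θ' : Frag} (hv : IsValue v)
    (h : Typing [] θ v (.arrow A θ' B)) : (∃ a, v = .lam a) ∨ (∃ a, v = .recc a) := by
  generalize hΓ : ([] : Ctx) = Γ at h
  generalize hT : Ty.arrow A θ' B = T at h
  induction h with
  | tvar hn => rw [← hΓ] at hn; simp at hn
  | tlam _ => exact .inl ⟨_, rfl⟩
  | trec _ => exact .inr ⟨_, rfl⟩
  | tsub _ ih => exact ih hv hΓ hT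
  | tfoval _ hfo _ _ => subst hT; cases hfo
  | _ => cases hv <;> simp_all

theorem IsValue.eq_box_of_typing {A : Ty} {θ' : Frag} (hv : IsValue v)
    (h : Typing [] θ v (.at_ A θ')) : ∃ w, v = .box w ∧ IsValue w := by
  generalize hΓ : ([] : Ctx) = Γ at h
  generalize hT : Ty.at_ A θ' = T at h
  induction h with
  | tvar hn => rw [← hΓ] at hn; simp at hn
  | tboxP _ | tboxL _ => cases hv with | box hw => exact ⟨_, rfl, hw⟩
  | tboxLV hw _ => exact ⟨_, rfl, hw⟩
  | tsub _ ih | tfoval _ _ _ ih => exact ih hv hΓ hT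
  | _ => cases hv <;> simp_all

theorem IsValue.eq_inl_or_eq_inr_of_typing {A B : Ty} (hv : IsValue v)
    (h : Typing [] θ v (.sum A B)) :
    (∃ w, v = .inl w ∧ IsValue w) ∨ (∃ w, v = .inr w ∧ IsValue w) := by
  generalize hΓ : ([] : Ctx) = Γ at h
  generalize hT : Ty.sum A B = T at h
  induction h with
  | tvar hn => rw [← hΓ] at hn; simp at hn
  | tinl _ => cases hv with | inl hw => exact .inl ⟨_, rfl, hw⟩
  | tinr _ => cases hv with | inr hw => exact .inr ⟨_, rfl, hw⟩
  | tsub _ ih | tfoval _ _ _ ih => exact ih hv hΓ hT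
  | _ => cases hv <;> simp_all

theorem IsValue.eq_roll_of_typing {A : Ty} (hv : IsValue v) (h : Typing [] θ v (.mu A)) :
    ∃ w, v = .roll w ∧ IsValue w := by
  generalize hΓ : ([] : Ctx) = Γ at h
  generalize hT : Ty.mu A = T at h
  induction h with
  | tvar hn => rw [← hΓ] at hn; simp at hn
  | troll _ => cases hv with | roll hw => exact ⟨_, rfl, hw⟩
  | tsub _ ih => exact ih hv hΓ hT
  | tfoval _ hfo _ _ => subst hT; cases hfo
  | _ => cases hv <;> simp_all

end CanonicalForms

theorem Typing.exists_of_box {Γ : Ctx} {θ θ' : Frag} {a : Tm} {A : Ty}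
    (h : Typing Γ θ (.box a) (.at_ A θ')) : ∃ θ'', Typing Γ θ'' a A := by
  generalize ht : Tm.box a = t at h
  generalize hT : Ty.at_ A θ' = T at h
  induction h with
  | tboxP h' | tboxL h' | tboxLV _ h' => cases ht; cases hT; exact ⟨_, h'⟩
  | tsub _ ih | tfoval _ _ _ ih => exact ih ht hT
  | _ => simp at ht

section Elimination

variable {θ θ' : Frag} {a b b₁ b₂ : Tm} {A B : Ty}

theorem exists_step_app (ha : Typing [] θ a (.arrow A θ' B)) (hav : ValueOrSteps a)
    (hbv : ValueOrSteps (.box b)) : ∃ t, Step (.app a b) t := by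
  rcases hav with hav | ⟨_, has⟩
  · rcases hbv.of_box with hbv | ⟨_, hbs⟩
    · rcases hav.eq_lam_or_eq_recc_of_typing ha with ⟨_, rfl⟩ | ⟨_, rfl⟩
      exacts [⟨_, .beta hbv⟩, ⟨_, .betaRec hbv⟩]
    · exact ⟨_, .app2 hav hbs⟩
  · exact ⟨_, .app1 has⟩

theorem exists_step_unbox (ha : Typing [] θ a (.at_ A θ')) (hav : ValueOrSteps a) :
    ∃ t, Step (.unbox a b) t := by
  rcases hav with hav | ⟨_, has⟩
  · obtain ⟨_, rfl, hw⟩ := hav.eq_box_of_typing ha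
    exact ⟨_, .unbox hw⟩
  · exact ⟨_, .unbox1 has⟩

theorem exists_step_case (ha : Typing [] θ (.box a) (.at_ (.sum A B) θ'))
    (hav : ValueOrSteps (.box a)) : ∃ t, Step (.case a b₁ b₂) t := by
  obtain ⟨_, ha⟩ := ha.exists_of_box
  rcases hav.of_box with hav | ⟨_, has⟩
  · rcases hav.eq_inl_or_eq_inr_of_typing ha with ⟨_, rfl, hw⟩ | ⟨_, rfl, hw⟩
    exacts [⟨_, .caseL hw⟩, ⟨_, .caseR hw⟩]
  · exact ⟨_, .caseCtx has⟩

theorem exists_step_unroll (ha : Typing [] θ a (.mu A)) (hav : ValueOrSteps a) :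
    ∃ t, Step (.unroll a) t := by
  rcases hav with hav | ⟨_, has⟩
  · obtain ⟨_, rfl, hw⟩ := hav.eq_roll_of_typing ha
    exact ⟨_, .unroll hw⟩
  · exact ⟨_, .unrollCtx has⟩

end Elimination

/-- Progress: a closed well-typed term is a value or steps. -/
theorem progress {θ : Frag} {a : Tm} {A : Ty} (h : Typing [] θ a A) :
    IsValue a ∨ ∃ a', Step a a' := by
  change ValueOrSteps a
  generalize hΓ : ([] : Ctx) = Γ at h
  induction h with
  | tvar hn => subst hΓ; simp at hn
  | tlam => exact Or.inl (.lam _)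
  | trec => exact Or.inl (.recc _)
  | tunit => exact Or.inl .unit
  | tfoval hv _ _ _ => exact Or.inl hv
  | tboxLV hv _ => exact Or.inl (.box hv)
  | tboxP _ ih | tboxL _ ih => exact (ih hΓ).box
  | tinl _ ih => exact (ih hΓ).inl
  | tinr _ ih => exact (ih hΓ).inr
  | troll _ ih => exact (ih hΓ).roll
  | tsub _ ih => exact ih hΓ
  | tapp ha _ iha ihb => subst hΓ; exact Or.inr (exists_step_app ha (iha rfl) (ihb rfl))
  | tunbox ha _ iha _ => subst hΓ; exact Or.inr (exists_step_unbox ha (iha rfl))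
  | tcase ha _ _ iha _ _ => subst hΓ; exact Or.inr (exists_step_case ha (iha rfl))
  | tunroll ha iha => subst hΓ; exact Or.inr (exists_step_unroll ha (iha rfl))
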